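/- arXiv:1502.04735 — 2 statements merged into one kernel-verified Lean document; each statement's English description precedes it below -/
import Mathlib

section
/- (No restriction of information, weak self-reinforcement.) Let α = 0 and suppose ρ ≤ 1. Then H_0(u) = r(v*(u)) G_0(u) − u < 0 for every u ∈ (0, ū). Consequently u = 0 is the only zero of H_0 on [0, ū), i.e. the non-excited state (0, v*(0)) is the unique constant steady state. -/
/-! For `u > 0` the ignition term is `u (1 - u)`, and the sigmoid `r` takes values in `[0, ρ] ⊆ [0, 1]`,
so `r(v*(u)) u (1 - u) < u`: the reaction can never balance the linear decay. -/

open Real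

lemma div_one_add_exp_le {ρ : ℝ} (hρ : 0 ≤ ρ) (x : ℝ) : ρ / (1 + exp x) ≤ ρ :=
  div_le_self hρ (by linarith [exp_pos x])

lemma mul_mul_one_sub_lt_self {c u : ℝ} (hc₀ : 0 ≤ c) (hc₁ : c ≤ 1) (hu : 0 < u) :
    c * (u * (1 - u)) < u := by
  rcases le_or_gt 1 u with hu₁ | hu₁
  · nlinarith [mul_nonneg hc₀ (mul_nonneg hu.le (sub_nonneg.2 hu₁))]
  · calc c * (u * (1 - u)) ≤ u * (1 - u) := mul_le_of_le_one_left (by nlinarith) hc₁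
      _ < u := by nlinarith

theorem stmt4_general (ρ β abar : ℝ)
    (hρ : 0 < ρ)
    (hρ1 : ρ ≤ 1)
    (r : ℝ → ℝ) (G : ℝ → ℝ → ℝ)
    (hr : ∀ z, r z = ρ / (1 + Real.exp (-β * (z - abar))))
    (hG : ∀ a u, G a u = if u ≤ a then 0 else (u - a) * (1 - u))
    (ubar : ℝ)
    (vstar : ℝ → ℝ)
    (H : ℝ → ℝ) (hH : ∀ u, H u = r (vstar u) * G 0 u - u) :
    (∀ u ∈ Set.Ioo (0 : ℝ) ubar, H u < 0) ∧
      (∀ u ∈ Set.Ico (0 : ℝ) ubar, H u = 0 → u = 0) := by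
  have hneg : ∀ u ∈ Set.Ioo (0 : ℝ) ubar, H u < 0 := by
    rintro u ⟨hu, -⟩
    have hG₀ : G 0 u = u * (1 - u) := by rw [hG, if_neg hu.not_ge, sub_zero]
    have hr₀ : 0 ≤ r (vstar u) := by rw [hr]; positivity
    have hr₁ : r (vstar u) ≤ 1 := hr _ ▸ (div_one_add_exp_le hρ.le _).trans hρ1
    rw [hH, hG₀, sub_neg]
    exact mul_mul_one_sub_lt_self hr₀ hr₁ hu
  refine ⟨hneg, fun u hu hHu => ?_⟩
  by_contra hu₀
  exact (hneg u ⟨hu.1.lt_of_ne' hu₀, hu.2⟩).ne hHu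

/-- no restriction of information, weak self-reinforcement:
if `ρ ≤ 1` then `H_0(u) < 0` on `(0, ū)`, hence `u = 0` is the only zero of
`H_0` on `[0, ū)`. -/
theorem stmt4 (ρ β abar mbar p k₂ : ℝ)
    (hρ : 0 < ρ) (hβ : 0 < β) (hm : 0 < mbar) (hp : 0 < p)
    (hk₂ : k₂ ∈ Set.Ioo (0 : ℝ) 1) (hρ1 : ρ ≤ 1)
    (r h : ℝ → ℝ) (G : ℝ → ℝ → ℝ)
    (hr : ∀ z, r z = ρ / (1 + Real.exp (-β * (z - abar))))
    (hh : ∀ u, h u = (1 + mbar * u) ^ (-p))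
    (hG : ∀ a u, G a u = if u ≤ a then 0 else (u - a) * (1 - u))
    (ubar : ℝ) (hubar : ubar = (1 / mbar) * ((1 / k₂) ^ (1 / p) - 1))
    (vstar : ℝ → ℝ) (hv : ∀ u, vstar u = 1 / (h u - k₂))
    (H : ℝ → ℝ) (hH : ∀ u, H u = r (vstar u) * G 0 u - u) :
    (∀ u ∈ Set.Ioo (0 : ℝ) ubar, H u < 0) ∧
      (∀ u ∈ Set.Ico (0 : ℝ) ubar, H u = 0 → u = 0) :=
  stmt4_general ρ β abar hρ hρ1 r G hr hG ubar vstar H hH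
end

section
/- (Strong self-reinforcement creates an excited equilibrium for every transition rate, α = 0.) Let α = 0 and fix u₀ ∈ (0, min{1, ū}) such that v*(u₀) ≥ ā. Then for every ρ > 2/(1 − u₀) and every β > 0 one has r(v*(u₀)) ≥ ρ/2 and hence H_0(u₀) = r(v*(u₀)) u₀ (1 − u₀) − u₀ > 0. -/
/-!
Above its midpoint `ā` the logistic rate `r` is at least half its ceiling `ρ`, so
`r(v*(u₀)) ≥ ρ/2`. Then `r(v*(u₀)) u₀ (1 - u₀) ≥ (ρ (1 - u₀) / 2) u₀ > u₀`, since
`ρ > 2/(1 - u₀)` means exactly `ρ (1 - u₀) / 2 > 1`.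
-/

open Real

lemma half_le_div_one_add_exp {ρ β a z : ℝ} (hρ : 0 ≤ ρ) (hβ : 0 ≤ β) (hz : a ≤ z) :
    ρ / 2 ≤ ρ / (1 + exp (-β * (z - a))) := by
  have hexp : exp (-β * (z - a)) ≤ 1 :=
    exp_le_one_iff.mpr (by nlinarith)
  exact div_le_div_of_nonneg_left hρ (by positivity) (by linarith)

lemma sub_pos_of_half_le {ρ R u : ℝ} (hu : u ∈ Set.Ioo 0 1) (hρ : 2 / (1 - u) < ρ)
    (hR : ρ / 2 ≤ R) : 0 < R * (u * (1 - u)) - u := by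
  obtain ⟨hu0, hu1⟩ := hu
  have h1u : 0 < 1 - u := by linarith
  have hρu : 2 < ρ * (1 - u) := (div_lt_iff₀ h1u).mp hρ
  calc 0 < (ρ * (1 - u) / 2 - 1) * u := mul_pos (by linarith) hu0
    _ = ρ / 2 * (u * (1 - u)) - u := by ring
    _ ≤ R * (u * (1 - u)) - u := by gcongr

theorem stmt18_general (ρ β abar : ℝ)
    (r : ℝ → ℝ)
    (hr : ∀ z, r z = ρ / (1 + Real.exp (-β * (z - abar))))
    (ubar : ℝ)
    (vstar : ℝ → ℝ)
    (u₀ : ℝ) (hu₀ : u₀ ∈ Set.Ioo 0 (min 1 ubar))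
    (hva : abar ≤ vstar u₀)
    (hρ : 2 / (1 - u₀) < ρ) (hβ : 0 < β) :
    ρ / 2 ≤ r (vstar u₀) ∧
      0 < r (vstar u₀) * (u₀ * (1 - u₀)) - u₀ := by
  have hu : u₀ ∈ Set.Ioo 0 1 := ⟨hu₀.1, hu₀.2.trans_le (min_le_left _ _)⟩
  have hρ₀ : 0 ≤ ρ := (div_pos two_pos (sub_pos.mpr hu.2)).le.trans hρ.le
  have hhalf : ρ / 2 ≤ r (vstar u₀) := hr _ ▸ half_le_div_one_add_exp hρ₀ hβ.le hva
  exact ⟨hhalf, sub_pos_of_half_le hu hρ hhalf⟩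

/-- strong self-reinforcement creates an excited equilibrium for
every transition rate, α = 0: fix `u₀ ∈ (0, min{1, ū})` with `v*(u₀) ≥ ā`.
Then for `ρ > 2/(1 − u₀)` and every `β > 0`, `r(v*(u₀)) ≥ ρ/2`, and hence
`H_0(u₀) = r(v*(u₀)) u₀ (1 − u₀) − u₀ > 0`. -/
theorem stmt18 (ρ β abar mbar p k₂ : ℝ)
    (hm : 0 < mbar) (hp : 0 < p) (hk₂ : k₂ ∈ Set.Ioo (0 : ℝ) 1)
    (r h : ℝ → ℝ)
    (hr : ∀ z, r z = ρ / (1 + Real.exp (-β * (z - abar))))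
    (hh : ∀ u, h u = (1 + mbar * u) ^ (-p))
    (ubar : ℝ) (hubar : ubar = (1 / mbar) * ((1 / k₂) ^ (1 / p) - 1))
    (vstar : ℝ → ℝ) (hv : ∀ u, vstar u = 1 / (h u - k₂))
    (u₀ : ℝ) (hu₀ : u₀ ∈ Set.Ioo 0 (min 1 ubar))
    (hva : abar ≤ vstar u₀)
    (hρ : 2 / (1 - u₀) < ρ) (hβ : 0 < β) :
    ρ / 2 ≤ r (vstar u₀) ∧
      0 < r (vstar u₀) * (u₀ * (1 - u₀)) - u₀ :=
  stmt18_general ρ β abar r hr ubar vstar u₀ hu₀ hva hρ hβ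
end
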